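/- (Precise form of Theorem 3.) Let N ≥ 3, let A ∈ ℂ^{N×N} be Hermitian positive definite with eigenvalues λ_0 > λ_1 ≥ ⋯ ≥ λ_{N−1} > 0 (descending, with multiplicity), let u_0 and u_{N−1} be orthonormal eigenvectors of A for λ_0 and λ_{N−1} respectively, let α, β > 0 with α² + β² = 1, and set b = α u_0 + β u_{N−1} and ξ = λ_0. If β λ_0 + λ_{N−1} < λ_1 and β λ_0 − (3/2) λ_{N−1} > λ_{N−2}, then the condition number of Θ = A − ξ b bᴴ equals λ_1/λ_{N−2}. -/

import Mathlib

/-!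
Θ agrees with A on the orthogonal complement of the plane spanned by u₀ and u_{N-1}, and maps
that plane into itself by a 2 × 2 matrix whose characteristic polynomial is
t² − λ_{N-1} t − λ₀ β² (λ₀ − λ_{N-1}); the two conditions place the absolute values of both
roots in [λ_{N-2}, λ₁]. So an eigenvector of Θ either lies in the plane, and its eigenvalue is a
root, or has a nonzero component orthogonal to the plane, which is an eigenvector of A for the
same eigenvalue; as that component is orthogonal to u₀ and to u_{N-1}, the eigenvalue can be λ₀
or λ_{N-1} only if it occurs twice in the listing, hence it lies in [λ_{N-2}, λ₁].
Eigenvectors of A for λ₁ and λ_{N-2} orthogonal to the plane are eigenvectors of Θ, so both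
bounds are attained.
-/

open Matrix
open scoped ComplexOrder

noncomputable section

/-- `l` lists the eigenvalues of the Hermitian matrix `A` (with Hermitian proof `hA`)
in descending order with multiplicity. -/
def IsDescEigListing {N : ℕ} {A : Matrix (Fin N) (Fin N) ℂ}
    (hA : A.IsHermitian) (l : Fin N → ℝ) : Prop :=
  Antitone l ∧ ∃ e : Equiv.Perm (Fin N), ∀ i, l i = hA.eigenvalues (e i)

/-- The condition number of a Hermitian matrix: the ratio of its largest singular value
to its smallest singular value, the singular values being the absolute values of the
eigenvalues. -/
noncomputable def hermCond {N : ℕ} {M : Matrix (Fin N) (Fin N) ℂ}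
    (hM : M.IsHermitian) : ℝ :=
  (⨆ i, |hM.eigenvalues i|) / (⨅ i, |hM.eigenvalues i|)

namespace Matrix.IsHermitian

variable {n : Type*} [Fintype n] {A : Matrix n n ℂ}

lemma star_dotProduct_mulVec_of_mulVec_eq (hA : A.IsHermitian) {x : n → ℂ} {s : ℝ}
    (hx : A *ᵥ x = (s : ℂ) • x) (y : n → ℂ) :
    star x ⬝ᵥ (A *ᵥ y) = s * (star x ⬝ᵥ y) := by
  rw [dotProduct_mulVec, ← hA.eq, ← star_mulVec, hx, star_smul, Complex.star_def,
    Complex.conj_ofReal, smul_dotProduct, smul_eq_mul]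

lemma star_dotProduct_eq_zero_of_mulVec_eq (hA : A.IsHermitian) {x y : n → ℂ} {s t : ℝ}
    (hx : A *ᵥ x = (s : ℂ) • x) (hy : A *ᵥ y = (t : ℂ) • y) (hst : s ≠ t) :
    star x ⬝ᵥ y = 0 := by
  have h := hA.star_dotProduct_mulVec_of_mulVec_eq hx y
  rw [hy, dotProduct_smul, smul_eq_mul] at h
  have hts : (t : ℂ) - s ≠ 0 := sub_ne_zero.mpr (by exact_mod_cast hst.symm)
  have hmul : ((t : ℂ) - s) * (star x ⬝ᵥ y) = 0 := by linear_combination h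
  exact (mul_eq_zero.mp hmul).resolve_left hts

variable [DecidableEq n]

lemma mulVec_eigenvectorBasis' (hA : A.IsHermitian) (i : n) :
    A *ᵥ ⇑(hA.eigenvectorBasis i) = (hA.eigenvalues i : ℂ) • ⇑(hA.eigenvectorBasis i) := by
  rw [hA.mulVec_eigenvectorBasis, RCLike.real_smul_eq_coe_smul (K := ℂ)]
  rfl

lemma eigenvectorBasis_ne_zero (hA : A.IsHermitian) (i : n) :
    ⇑(hA.eigenvectorBasis i) ≠ 0 := fun h =>
  hA.eigenvectorBasis.orthonormal.ne_zero i (by simpa using congrArg (WithLp.toLp 2) h)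

lemma star_eigenvectorBasis_dotProduct (hA : A.IsHermitian) (i j : n) :
    star ⇑(hA.eigenvectorBasis i) ⬝ᵥ ⇑(hA.eigenvectorBasis j) = if i = j then 1 else 0 := by
  rw [dotProduct_comm, ← EuclideanSpace.inner_eq_star_dotProduct]
  exact orthonormal_iff_ite.mp hA.eigenvectorBasis.orthonormal i j

lemma exists_eigenvalues_eq_of_mulVec_eq (hA : A.IsHermitian) {v : n → ℂ} {t : ℝ}
    (hv : v ≠ 0) (h : A *ᵥ v = (t : ℂ) • v) : ∃ i, hA.eigenvalues i = t := by
  have ht : Module.End.HasEigenvalue (toLin' A) (t : ℂ) :=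
    Module.End.hasEigenvalue_of_hasEigenvector
      ⟨Module.End.mem_eigenspace_iff.mpr (by rwa [toLin'_apply]), hv⟩
  have hmem := ht.mem_spectrum
  rw [spectrum_toLin', hA.spectrum_eq_image_range] at hmem
  obtain ⟨_, ⟨i, rfl⟩, hi⟩ := hmem
  exact ⟨i, Complex.ofReal_injective hi⟩

lemma card_eigenvalues_eq_finrank_eigenspace (hA : A.IsHermitian) (μ : ℝ) :
    Finset.card {i | hA.eigenvalues i = μ} =
      Module.finrank ℂ (Module.End.eigenspace (toEuclideanLin A) μ) := by
  rw [← (isSymmetric_toEuclideanLin_iff.mpr hA).card_filter_eigenvalues_eq finrank_euclideanSpace]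
  refine Finset.card_equiv (Fintype.equivOfCardEq (Fintype.card_fin _)).symm fun i => ?_
  rw [Finset.mem_filter_univ]
  simp [eigenvalues, eigenvalues₀]

lemma exists_ne_eigenvalues_eq_of_orthogonal (hA : A.IsHermitian) {x y : n → ℂ} {t : ℝ}
    (hx0 : x ≠ 0) (hy0 : y ≠ 0) (hx : A *ᵥ x = (t : ℂ) • x) (hy : A *ᵥ y = (t : ℂ) • y)
    (hxy : star x ⬝ᵥ y = 0) :
    ∃ i j, i ≠ j ∧ hA.eigenvalues i = t ∧ hA.eigenvalues j = t := by
  let f : Fin 2 → EuclideanSpace ℂ n := ![WithLp.toLp 2 x, WithLp.toLp 2 y]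
  have hyx : star y ⬝ᵥ x = 0 := by rw [star_dotProduct, hxy, star_zero]
  have hli : LinearIndependent ℂ f := by
    refine linearIndependent_of_ne_zero_of_inner_eq_zero (fun i => ?_) fun i j hij => ?_
    · fin_cases i <;> simpa [f]
    · fin_cases i <;> fin_cases j <;>
        simp_all [f, EuclideanSpace.inner_eq_star_dotProduct, dotProduct_comm]
  have hspan : Submodule.span ℂ (Set.range f) ≤ Module.End.eigenspace (toEuclideanLin A) t := by
    rw [Submodule.span_le]
    rintro _ ⟨i, rfl⟩
    fin_cases i <;> simp [f, hx, hy]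
  have hcard : 1 < Finset.card {i | hA.eigenvalues i = t} := by
    rw [hA.card_eigenvalues_eq_finrank_eigenspace]
    refine lt_of_lt_of_le ?_ (Submodule.finrank_mono hspan)
    simp [finrank_span_eq_card hli]
  obtain ⟨i, hi, j, hj, hij⟩ := Finset.one_lt_card.mp hcard
  exact ⟨i, j, hij, by simpa using hi, by simpa using hj⟩

lemma exists_orthogonal_mulVec_eq_of_eigenvalues_eq (hA : A.IsHermitian) {i j : n}
    (hij : i ≠ j) (h : hA.eigenvalues i = hA.eigenvalues j) (u : n → ℂ) :
    ∃ v ≠ 0, A *ᵥ v = (hA.eigenvalues i : ℂ) • v ∧ star u ⬝ᵥ v = 0 := by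
  set ei := ⇑(hA.eigenvectorBasis i)
  set ej := ⇑(hA.eigenvectorBasis j)
  have hei := hA.mulVec_eigenvectorBasis' i
  have hej := hA.mulVec_eigenvectorBasis' j
  by_cases hui : star u ⬝ᵥ ei = 0
  · exact ⟨ei, hA.eigenvectorBasis_ne_zero i, hei, hui⟩
  refine ⟨(star u ⬝ᵥ ej) • ei - (star u ⬝ᵥ ei) • ej, fun h0 => hui ?_, ?_, ?_⟩
  · have := congrArg (star ej ⬝ᵥ ·) h0
    simpa [ei, ej, dotProduct_sub, hA.star_eigenvectorBasis_dotProduct, hij.symm] using this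
  · rw [mulVec_sub, mulVec_smul, mulVec_smul, hei, hej, h]
    module
  · simp only [dotProduct_sub, dotProduct_smul, smul_eq_mul]
    ring

end Matrix.IsHermitian

namespace IsDescEigListing

variable {N : ℕ} {A : Matrix (Fin N) (Fin N) ℂ} {hA : A.IsHermitian} {lam : Fin N → ℝ}

lemma exists_eq_of_mulVec_eq (hlam : IsDescEigListing hA lam) {v : Fin N → ℂ} {t : ℝ}
    (hv : v ≠ 0) (h : A *ᵥ v = (t : ℂ) • v) : ∃ k, lam k = t := by
  obtain ⟨-, e, he⟩ := hlam
  obtain ⟨i, hi⟩ := hA.exists_eigenvalues_eq_of_mulVec_eq hv h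
  exact ⟨e.symm i, by rw [he, e.apply_symm_apply, hi]⟩

lemma exists_ne_eq_of_orthogonal (hlam : IsDescEigListing hA lam) {u w : Fin N → ℂ}
    {k : Fin N} {t : ℝ} (hu0 : u ≠ 0) (hu : A *ᵥ u = (lam k : ℂ) • u) (hw0 : w ≠ 0)
    (hw : A *ᵥ w = (t : ℂ) • w) (huw : star u ⬝ᵥ w = 0) : ∃ r ≠ k, lam r = t := by
  obtain ⟨r, hr⟩ := hlam.exists_eq_of_mulVec_eq hw0 hw
  by_cases hrk : r = k
  · subst hrk
    obtain ⟨-, e, he⟩ := hlam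
    rw [hr] at hu
    obtain ⟨i, j, hij, hi, hj⟩ := hA.exists_ne_eigenvalues_eq_of_orthogonal hu0 hw0 hu hw huw
    by_cases hir : e.symm i = r
    · refine ⟨e.symm j, fun hjr => hij (e.symm.injective (hir.trans hjr.symm)), ?_⟩
      rw [he, e.apply_symm_apply, hj]
    · exact ⟨e.symm i, hir, by rw [he, e.apply_symm_apply, hi]⟩
  · exact ⟨r, hrk, hr⟩

lemma le_one_of_orthogonal (hlam : IsDescEigListing hA lam) (hN : 1 < N) {u w : Fin N → ℂ}
    {t : ℝ} (hu0 : u ≠ 0) (hu : A *ᵥ u = (lam ⟨0, by omega⟩ : ℂ) • u) (hw0 : w ≠ 0)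
    (hw : A *ᵥ w = (t : ℂ) • w) (huw : star u ⬝ᵥ w = 0) : t ≤ lam ⟨1, hN⟩ := by
  obtain ⟨r, hr, rfl⟩ := hlam.exists_ne_eq_of_orthogonal hu0 hu hw0 hw huw
  exact hlam.1 (Fin.mk_le_of_le_val (Nat.one_le_iff_ne_zero.mpr (Fin.val_ne_iff.mpr hr)))

lemma le_of_orthogonal_last (hlam : IsDescEigListing hA lam) (hN : 1 < N) {u w : Fin N → ℂ}
    {t : ℝ} (hu0 : u ≠ 0) (hu : A *ᵥ u = (lam ⟨N - 1, by omega⟩ : ℂ) • u) (hw0 : w ≠ 0)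
    (hw : A *ᵥ w = (t : ℂ) • w) (huw : star u ⬝ᵥ w = 0) : lam ⟨N - 2, by omega⟩ ≤ t := by
  obtain ⟨r, hr, rfl⟩ := hlam.exists_ne_eq_of_orthogonal hu0 hu hw0 hw huw
  have hr' := Fin.val_ne_iff.mpr hr
  exact hlam.1 (Fin.le_def.mpr (by simp only at hr' ⊢; omega))

lemma exists_orthogonal_mulVec_eq (hlam : IsDescEigListing hA lam) {k k' : Fin N}
    (hkk : k ≠ k') {u : Fin N → ℂ} (hu : A *ᵥ u = (lam k' : ℂ) • u) :
    ∃ v ≠ 0, A *ᵥ v = (lam k : ℂ) • v ∧ star u ⬝ᵥ v = 0 := by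
  obtain ⟨-, e, he⟩ := hlam
  simp only [he] at hu ⊢
  by_cases h : hA.eigenvalues (e k) = hA.eigenvalues (e k')
  · exact hA.exists_orthogonal_mulVec_eq_of_eigenvalues_eq (e.injective.ne hkk) h u
  · have hv := hA.mulVec_eigenvectorBasis' (e k)
    exact ⟨_, hA.eigenvectorBasis_ne_zero (e k), hv,
      hA.star_dotProduct_eq_zero_of_mulVec_eq hu hv (Ne.symm h)⟩

end IsDescEigListing

section RankOne

variable {n : Type*} [Fintype n]

lemma sub_smul_vecMulVec_mulVec (A : Matrix n n ℂ) (b v : n → ℂ) (ξ : ℂ) :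
    (A - ξ • vecMulVec b (star b)) *ᵥ v = A *ᵥ v - (ξ * (star b ⬝ᵥ v)) • b := by
  rw [sub_mulVec, smul_mulVec, vecMulVec_mulVec, op_smul_eq_smul, smul_smul]

variable {A : Matrix n n ℂ} {u₀ u₁ b v : n → ℂ} {s₀ s₁ α β ξ t : ℝ}

lemma star_dotProduct_of_eq_add (hb : b = (α : ℂ) • u₀ + (β : ℂ) • u₁) (w : n → ℂ) :
    star b ⬝ᵥ w = α * (star u₀ ⬝ᵥ w) + β * (star u₁ ⬝ᵥ w) := by
  simp [hb, star_add, star_smul, add_dotProduct, smul_dotProduct]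

lemma star_dotProduct_of_mulVec_sub_smul_vecMulVec (hA : A.IsHermitian)
    (hu₀ : A *ᵥ u₀ = (s₀ : ℂ) • u₀)
    (hv : (A - (ξ : ℂ) • vecMulVec b (star b)) *ᵥ v = (t : ℂ) • v) :
    s₀ * (star u₀ ⬝ᵥ v) = t * (star u₀ ⬝ᵥ v) + ξ * (star b ⬝ᵥ v) * (star u₀ ⬝ᵥ b) := by
  rw [sub_smul_vecMulVec_mulVec] at hv
  have h := congrArg (star u₀ ⬝ᵥ ·) hv
  simp only [dotProduct_sub, dotProduct_smul, smul_eq_mul,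
    hA.star_dotProduct_mulVec_of_mulVec_eq hu₀] at h
  linear_combination h

lemma two_by_two_of_mulVec_sub_smul_vecMulVec (hA : A.IsHermitian)
    (hu₀ : A *ᵥ u₀ = (s₀ : ℂ) • u₀) (hu₁ : A *ᵥ u₁ = (s₁ : ℂ) • u₁)
    (hu₀₀ : star u₀ ⬝ᵥ u₀ = 1) (hu₁₁ : star u₁ ⬝ᵥ u₁ = 1) (hu₀₁ : star u₀ ⬝ᵥ u₁ = 0)
    (hb : b = (α : ℂ) • u₀ + (β : ℂ) • u₁)
    (hv : (A - (ξ : ℂ) • vecMulVec b (star b)) *ᵥ v = (t : ℂ) • v) :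
    s₀ * (star u₀ ⬝ᵥ v) = t * (star u₀ ⬝ᵥ v) +
        ξ * (α * (star u₀ ⬝ᵥ v) + β * (star u₁ ⬝ᵥ v)) * α ∧
      s₁ * (star u₁ ⬝ᵥ v) = t * (star u₁ ⬝ᵥ v) +
        ξ * (α * (star u₀ ⬝ᵥ v) + β * (star u₁ ⬝ᵥ v)) * β := by
  have hu₁₀ : star u₁ ⬝ᵥ u₀ = 0 := by rw [star_dotProduct, hu₀₁, star_zero]
  have h₀ := star_dotProduct_of_mulVec_sub_smul_vecMulVec hA hu₀ hv
  have h₁ := star_dotProduct_of_mulVec_sub_smul_vecMulVec hA hu₁ hv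
  rw [star_dotProduct_of_eq_add hb] at h₀ h₁
  simp only [hb, dotProduct_add, dotProduct_smul, smul_eq_mul, hu₀₀, hu₁₁, hu₀₁, hu₁₀] at h₀ h₁
  constructor
  · linear_combination h₀
  · linear_combination h₁

lemma mulVec_sub_proj_of_mulVec_sub_smul_vecMulVec (hA : A.IsHermitian)
    (hu₀ : A *ᵥ u₀ = (s₀ : ℂ) • u₀) (hu₁ : A *ᵥ u₁ = (s₁ : ℂ) • u₁)
    (hu₀₀ : star u₀ ⬝ᵥ u₀ = 1) (hu₁₁ : star u₁ ⬝ᵥ u₁ = 1) (hu₀₁ : star u₀ ⬝ᵥ u₁ = 0)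
    (hb : b = (α : ℂ) • u₀ + (β : ℂ) • u₁)
    (hv : (A - (ξ : ℂ) • vecMulVec b (star b)) *ᵥ v = (t : ℂ) • v) :
    A *ᵥ (v - (star u₀ ⬝ᵥ v) • u₀ - (star u₁ ⬝ᵥ v) • u₁) =
      (t : ℂ) • (v - (star u₀ ⬝ᵥ v) • u₀ - (star u₁ ⬝ᵥ v) • u₁) := by
  obtain ⟨h₀, h₁⟩ :=
    two_by_two_of_mulVec_sub_smul_vecMulVec hA hu₀ hu₁ hu₀₀ hu₁₁ hu₀₁ hb hv
  rw [sub_smul_vecMulVec_mulVec, sub_eq_iff_eq_add, star_dotProduct_of_eq_add hb] at hv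
  rw [mulVec_sub, mulVec_sub, mulVec_smul, mulVec_smul, hu₀, hu₁, hv, hb]
  match_scalars
  · ring
  · linear_combination -h₀
  · linear_combination -h₁

end RankOne

/-- Given `α² + β² = 1`, `h₀` and `h₁` say that `(c₀, c₁)` is an eigenvector for `t` of
`!![ξ β², -ξ α β; -ξ α β, s - ξ β²]`; the quadratic is the characteristic polynomial of that matrix. -/
lemma quadratic_eq_zero_of_two_by_two {K : Type*} [CommRing K] [NoZeroDivisors K]
    {ξ s α β t c₀ c₁ : K} (hαβ : α ^ 2 + β ^ 2 = 1)
    (h₀ : ξ * c₀ = t * c₀ + ξ * (α * c₀ + β * c₁) * α)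
    (h₁ : s * c₁ = t * c₁ + ξ * (α * c₀ + β * c₁) * β) (hc : c₀ ≠ 0 ∨ c₁ ≠ 0) :
    t ^ 2 - s * t - ξ * β ^ 2 * (ξ - s) = 0 := by
  have e₀ : (t ^ 2 - s * t - ξ * β ^ 2 * (ξ - s)) * c₀ = 0 := by
    linear_combination (s - ξ * β ^ 2 - t) * h₀ + ξ * α * β * h₁ + ξ * c₀ * (s - t) * hαβ
  have e₁ : (t ^ 2 - s * t - ξ * β ^ 2 * (ξ - s)) * c₁ = 0 := by
    linear_combination
      ξ * α * β * h₀ + (ξ * β ^ 2 - t) * h₁ + ξ ^ 2 * β * (α * c₀ + β * c₁) * hαβ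
  rcases hc with hc | hc
  · exact (mul_eq_zero.mp e₀).resolve_right hc
  · exact (mul_eq_zero.mp e₁).resolve_right hc

/-- The convex quadratic `q` on the left of `ht` is positive at `±l₁` and negative at `±l₂`. -/
lemma abs_mem_Icc_of_quadratic_eq_zero {ξ s l₁ l₂ β t : ℝ} (hβ : β ^ 2 ≤ 1) (hs : 0 ≤ s)
    (hl₂ : 0 ≤ l₂) (h₁ : β * ξ + s < l₁) (h₂ : β * ξ - 3 / 2 * s > l₂)
    (ht : t ^ 2 - s * t - ξ * β ^ 2 * (ξ - s) = 0) : |t| ∈ Set.Icc l₂ l₁ := by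
  have hβ1 : β ≤ 1 := by nlinarith
  have hβ1' : -1 ≤ β := by nlinarith
  have hx : 0 < β * ξ := by linarith
  have hsξ : 0 ≤ (1 + β) * (β * ξ) * s := mul_nonneg (mul_nonneg (by linarith) hx.le) hs
  constructor
  · by_contra! hlt
    obtain ⟨ht₁, ht₂⟩ := abs_lt.mp hlt
    nlinarith [mul_pos (by linarith : (0:ℝ) < t + l₂) (by linarith : (0:ℝ) < l₂ + s - t),
      mul_pos (by linarith : (0:ℝ) < β * ξ - (l₂ + 3 / 2 * s))
        (by linarith : (0:ℝ) < β * ξ + (l₂ + 3 / 2 * s) - s),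
      mul_nonneg (mul_nonneg (by linarith : (0:ℝ) ≤ 1 - β) hx.le) hs, mul_nonneg hs hl₂]
  · by_contra! hgt
    have key : 0 < (l₁ - s - β * ξ) * (l₁ + β * ξ) := by
      apply mul_pos <;> linarith
    rcases lt_abs.mp hgt with h | h
    · nlinarith [mul_pos (by linarith : (0:ℝ) < t - l₁) (by linarith : (0:ℝ) < t + l₁ - s),
        mul_nonneg hs hx.le]
    · nlinarith [mul_pos (by linarith : (0:ℝ) < -t - l₁) (by linarith : (0:ℝ) < -t + l₁),
        mul_nonneg hs (by linarith : (0:ℝ) ≤ -t - l₁),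
        mul_pos (by linarith : (0:ℝ) < l₁ - β * ξ - s) (by linarith : (0:ℝ) < l₁ + β * ξ + s)]

lemma hermCond_eq_div {N : ℕ} {M : Matrix (Fin N) (Fin N) ℂ} (hM : M.IsHermitian) {lo hi : ℝ}
    (hlo : 0 ≤ lo)
    (hbound : ∀ (t : ℝ) (v : Fin N → ℂ), v ≠ 0 → M *ᵥ v = (t : ℂ) • v → |t| ∈ Set.Icc lo hi)
    (hhi : ∃ v ≠ 0, M *ᵥ v = (hi : ℂ) • v) (hlo' : ∃ v ≠ 0, M *ᵥ v = (lo : ℂ) • v) :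
    hermCond hM = hi / lo := by
  have hev (k : Fin N) : |hM.eigenvalues k| ∈ Set.Icc lo hi :=
    hbound _ _ (hM.eigenvectorBasis_ne_zero k) (hM.mulVec_eigenvectorBasis' k)
  obtain ⟨i, hi_eq⟩ := hhi.elim fun v ⟨hv0, hv⟩ => hM.exists_eigenvalues_eq_of_mulVec_eq hv0 hv
  obtain ⟨j, hj_eq⟩ := hlo'.elim fun v ⟨hv0, hv⟩ => hM.exists_eigenvalues_eq_of_mulVec_eq hv0 hv
  have : Nonempty (Fin N) := ⟨i⟩
  have hi_abs : |hM.eigenvalues i| = hi := by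
    have := (hev i).2
    rw [hi_eq] at this ⊢
    exact abs_of_nonneg ((abs_nonneg hi).trans this)
  have hj_abs : |hM.eigenvalues j| = lo := by rw [hj_eq, abs_of_nonneg hlo]
  unfold hermCond
  congr 1
  · refine le_antisymm (ciSup_le fun k => (hev k).2) (hi_abs.symm.le.trans ?_)
    exact le_ciSup (f := fun k => |hM.eigenvalues k|) (Set.finite_range _).bddAbove i
  · refine le_antisymm (le_trans ?_ hj_abs.le) (le_ciInf fun k => (hev k).1)
    exact ciInf_le (f := fun k => |hM.eigenvalues k|) (Set.finite_range _).bddBelow j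

namespace IsDescEigListing

variable {N : ℕ} {A : Matrix (Fin N) (Fin N) ℂ} {hA : A.IsHermitian} {lam : Fin N → ℝ}
  {u0 uN b : Fin N → ℂ} {α β : ℝ}

lemma exists_sub_smul_vecMulVec_mulVec_eq (hlam : IsDescEigListing hA lam) {k k' : Fin N}
    (hkk : k ≠ k') {s₀ : ℝ} (hks : lam k ≠ s₀) (hu0 : A *ᵥ u0 = (s₀ : ℂ) • u0)
    (huN : A *ᵥ uN = (lam k' : ℂ) • uN) (hb : b = (α : ℂ) • u0 + (β : ℂ) • uN) (ξ : ℂ) :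
    ∃ v ≠ 0, (A - ξ • vecMulVec b (star b)) *ᵥ v = (lam k : ℂ) • v := by
  obtain ⟨v, hv0, hv, hNv⟩ := hlam.exists_orthogonal_mulVec_eq hkk huN
  have h0v := hA.star_dotProduct_eq_zero_of_mulVec_eq hu0 hv hks.symm
  refine ⟨v, hv0, ?_⟩
  rw [sub_smul_vecMulVec_mulVec, star_dotProduct_of_eq_add hb, h0v, hNv, hv]
  simp

lemma abs_mem_Icc_of_sub_smul_vecMulVec_mulVec_eq (hlam : IsDescEigListing hA lam)
    (hN : 1 < N) (hpos : 0 ≤ lam ⟨N - 1, by omega⟩)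
    (hu0 : A *ᵥ u0 = (lam ⟨0, by omega⟩ : ℂ) • u0)
    (huN : A *ᵥ uN = (lam ⟨N - 1, by omega⟩ : ℂ) • uN)
    (hu0norm : star u0 ⬝ᵥ u0 = 1) (huNnorm : star uN ⬝ᵥ uN = 1) (horth : star u0 ⬝ᵥ uN = 0)
    (hαβ : α ^ 2 + β ^ 2 = 1) (hb : b = (α : ℂ) • u0 + (β : ℂ) • uN)
    (hcond1 : β * lam ⟨0, by omega⟩ + lam ⟨N - 1, by omega⟩ < lam ⟨1, hN⟩)
    (hcond2 : β * lam ⟨0, by omega⟩ - 3 / 2 * lam ⟨N - 1, by omega⟩ > lam ⟨N - 2, by omega⟩)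
    {v : Fin N → ℂ} {t : ℝ} (hv0 : v ≠ 0)
    (hv : (A - (lam ⟨0, by omega⟩ : ℂ) • vecMulVec b (star b)) *ᵥ v = (t : ℂ) • v) :
    |t| ∈ Set.Icc (lam ⟨N - 2, by omega⟩) (lam ⟨1, hN⟩) := by
  have hw := mulVec_sub_proj_of_mulVec_sub_smul_vecMulVec hA hu0 huN hu0norm huNnorm horth hb hv
  set w := v - (star u0 ⬝ᵥ v) • u0 - (star uN ⬝ᵥ v) • uN with hw_def
  have hlast : lam ⟨N - 1, by omega⟩ ≤ lam ⟨N - 2, by omega⟩ :=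
    hlam.1 (Fin.mk_le_mk.mpr (by omega))
  by_cases hw0 : w = 0
  · have hc : star u0 ⬝ᵥ v ≠ 0 ∨ star uN ⬝ᵥ v ≠ 0 := by
      by_contra! hc
      simp only [hw_def, hc.1, hc.2, zero_smul, sub_zero] at hw0
      exact hv0 hw0
    obtain ⟨h₀, h₁⟩ :=
      two_by_two_of_mulVec_sub_smul_vecMulVec hA hu0 huN hu0norm huNnorm horth hb hv
    have hq := quadratic_eq_zero_of_two_by_two (by exact_mod_cast hαβ) h₀ h₁ hc
    exact abs_mem_Icc_of_quadratic_eq_zero (by nlinarith) hpos (hpos.trans hlast) hcond1 hcond2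
      (by exact_mod_cast hq)
  · have hNu0 : star uN ⬝ᵥ u0 = 0 := by rw [star_dotProduct, horth, star_zero]
    have h0w : star u0 ⬝ᵥ w = 0 := by simp [hw_def, dotProduct_sub, hu0norm, horth]
    have hNw : star uN ⬝ᵥ w = 0 := by simp [hw_def, dotProduct_sub, huNnorm, hNu0]
    have hu00 : u0 ≠ 0 := by rintro rfl; simp at hu0norm
    have huN0 : uN ≠ 0 := by rintro rfl; simp at huNnorm
    have hlo := hlam.le_of_orthogonal_last hN huN0 huN hw0 hw hNw
    rw [abs_of_nonneg (hpos.trans (hlast.trans hlo))]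
    exact ⟨hlo, hlam.le_one_of_orthogonal hN hu00 hu0 hw0 hw h0w⟩

end IsDescEigListing

/-- Theorem 3 (precise form): with `b = α u₀ + β u_{N-1}` and `ξ = λ₀`, if
`β λ₀ + λ_{N-1} < λ₁` and `β λ₀ - (3/2) λ_{N-1} > λ_{N-2}`, then the condition number of
`Θ = A - ξ b bᴴ` equals `λ₁/λ_{N-2}`. -/
theorem sr1r_pia_condition {N : ℕ} (hN : 3 ≤ N)
    (A : Matrix (Fin N) (Fin N) ℂ) (hA : A.PosDef)
    (lam : Fin N → ℝ) (hlam : IsDescEigListing hA.isHermitian lam)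
    (hlampos : ∀ i, 0 < lam i)
    (h01 : lam ⟨0, by omega⟩ > lam ⟨1, by omega⟩)
    (u0 uN : Fin N → ℂ)
    (hu0 : A *ᵥ u0 = (lam ⟨0, by omega⟩ : ℂ) • u0)
    (huN : A *ᵥ uN = (lam ⟨N - 1, by omega⟩ : ℂ) • uN)
    (hu0norm : star u0 ⬝ᵥ u0 = 1) (huNnorm : star uN ⬝ᵥ uN = 1)
    (horth : star u0 ⬝ᵥ uN = 0)
    (α β : ℝ) (hαβ : α ^ 2 + β ^ 2 = 1)
    (b : Fin N → ℂ) (hb : b = (α : ℂ) • u0 + (β : ℂ) • uN)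
    (ξ : ℝ) (hξ : ξ = lam ⟨0, by omega⟩)
    (hcond1 : β * lam ⟨0, by omega⟩ + lam ⟨N - 1, by omega⟩ < lam ⟨1, by omega⟩)
    (hcond2 : β * lam ⟨0, by omega⟩ - (3 / 2) * lam ⟨N - 1, by omega⟩ > lam ⟨N - 2, by omega⟩)
    (hΘ : (A - (ξ : ℂ) • vecMulVec b (star b)).IsHermitian) :
    hermCond hΘ = lam ⟨1, by omega⟩ / lam ⟨N - 2, by omega⟩ := by
  subst hξ
  have h12 : lam ⟨N - 2, by omega⟩ ≤ lam ⟨1, by omega⟩ := hlam.1 (Fin.mk_le_mk.mpr (by omega))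
  refine hermCond_eq_div hΘ (hlampos _).le (fun t v hv0 hv => ?_) ?_ ?_
  · exact hlam.abs_mem_Icc_of_sub_smul_vecMulVec_mulVec_eq (by omega) (hlampos _).le hu0 huN
      hu0norm huNnorm horth hαβ hb hcond1 hcond2 hv0 hv
  · exact hlam.exists_sub_smul_vecMulVec_mulVec_eq (Fin.ne_of_val_ne (by simp; omega)) h01.ne
      hu0 huN hb _
  · exact hlam.exists_sub_smul_vecMulVec_mulVec_eq (Fin.ne_of_val_ne (by simp; omega))
      (h12.trans_lt h01).ne hu0 huN hb _
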